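/- arXiv:1706.07650 — 2 statements merged into one kernel-verified Lean document; each statement's English description precedes it below -/
import Mathlib

section
/- In the semi-discrete setting with Euclidean cost, the Monge–Kantorovich problem has a unique optimal transport plan, and this plan is deterministic: there is a measurable map T* with T*_{#}μ = ν such that the coupling π_{T*} defined by π_{T*}(A × B) = μ(A ∩ T*^{−1}(B)) is the unique minimizer of ∫ ‖x − y‖ dπ(x,y) over all couplings π of μ and ν, and W_1(μ,ν) = ∫ ‖x − T*(x)‖ dμ(x). -/
/-!
Maximize the semi-discrete dual `w ↦ ∑ⱼ aⱼ wⱼ + ∫ minⱼ (‖x - yⱼ‖ - wⱼ) dμ`: it is continuous,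
invariant under adding a constant to `w`, and decays linearly once `w` is normalized by
`max w = 0` and leaves a box, so it has a maximizer `w`. Because `d ≥ 2` and `μ ≪ volume`, the ties
`‖x - yᵢ‖ - ‖x - yₖ‖ = wᵢ - wₖ` (a bisector or a sheet of a hyperboloid) are `μ`-null, so almost
every `x` lies in an open Laguerre cell, the dual is differentiable, and its first-order condition
says that the cell of `yⱼ` has mass `aⱼ`. The map `T` sending each cell to its site therefore pushes
`μ` to `ν`, and the pair `(min (‖· - yⱼ‖ - wⱼ), w)` is a dual certificate: every coupling costs at
least the dual value, with equality only if it lives on the contact set, which is the graph of `T`.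
-/

open MeasureTheory ENNReal Filter Topology Set Module Function

noncomputable section

section LaguerreCells

variable {E ι : Type*} [NormedAddCommGroup E]

def laguerreCell (y : ι → E) (w : ι → ℝ) (k : ι) : Set E :=
  {x | ∀ i ≠ k, ‖x - y k‖ - w k < ‖x - y i‖ - w i}

theorem pairwise_disjoint_laguerreCell (y : ι → E) (w : ι → ℝ) :
    Pairwise (Disjoint on laguerreCell y w) :=
  fun i k hik => disjoint_left.2 fun _ hi hk => by linarith [hi k hik.symm, hk i hik]

variable [Fintype ι]

/-- Off the cells, a null set for the measures considered below, this takes the junk value `0`. -/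
def laguerreMap (y : ι → E) (w : ι → ℝ) (x : E) : E :=
  ∑ k, (laguerreCell y w k).indicator (fun _ => y k) x

variable (y : ι → E) (w : ι → ℝ)

theorem isOpen_laguerreCell (k : ι) : IsOpen (laguerreCell y w k) := by
  simp only [laguerreCell, ofPred_forall]
  exact isOpen_iInter_of_finite fun i => isOpen_iInter_of_finite fun _ =>
    isOpen_lt (by fun_prop) (by fun_prop)

theorem eventually_mem_laguerreCell {x : E} {k : ι} (hx : x ∈ laguerreCell y w k) :
    ∀ᶠ w' in 𝓝 w, x ∈ laguerreCell y w' k := by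
  simp only [laguerreCell, mem_ofPred_eq, eventually_all]
  exact fun i hik => (isOpen_lt (continuous_const.sub (continuous_apply k))
    (continuous_const.sub (continuous_apply i))).mem_nhds (hx i hik)

theorem laguerreMap_eq_of_mem {x : E} {k : ι} (hx : x ∈ laguerreCell y w k) :
    laguerreMap y w x = y k := by
  rw [laguerreMap, Finset.sum_eq_single k (fun i _ hik => indicator_of_notMem
    (fun hi => hik ((pairwise_disjoint_laguerreCell y w).eq (not_disjoint_iff.2 ⟨x, hi, hx⟩))) _)
    (by simp), indicator_of_mem hx]

variable [Nonempty ι]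

def cTransform (y : ι → E) (w : ι → ℝ) (x : E) : ℝ :=
  Finset.univ.inf' Finset.univ_nonempty fun j => ‖x - y j‖ - w j

theorem cTransform_le (x : E) (j : ι) : cTransform y w x ≤ ‖x - y j‖ - w j :=
  Finset.inf'_le _ (Finset.mem_univ j)

theorem le_cTransform {x : E} {b : ℝ} (h : ∀ j, b ≤ ‖x - y j‖ - w j) : b ≤ cTransform y w x :=
  Finset.le_inf' _ _ fun j _ => h j

theorem exists_cTransform_eq (x : E) : ∃ j, cTransform y w x = ‖x - y j‖ - w j := by
  obtain ⟨j, -, hj⟩ := Finset.exists_mem_eq_inf' Finset.univ_nonempty fun j => ‖x - y j‖ - w j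
  exact ⟨j, hj⟩

theorem cTransform_add_const (c : ℝ) (x : E) :
    cTransform y (w + fun _ => c) x = cTransform y w x - c := by
  obtain ⟨j, hj⟩ := exists_cTransform_eq y w x
  refine le_antisymm ?_ (le_cTransform _ _ fun i => ?_)
  · linarith [cTransform_le y (w + fun _ => c) x j,
      show (w + fun _ => c : ι → ℝ) j = w j + c from rfl]
  · linarith [cTransform_le y w x i, show (w + fun _ => c : ι → ℝ) i = w i + c from rfl]

theorem lipschitzWith_cTransform : LipschitzWith 1 (cTransform y w) := by
  refine LipschitzWith.of_le_add fun x x' => ?_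
  obtain ⟨j, hj⟩ := exists_cTransform_eq y w x'
  linarith [cTransform_le y w x j, norm_sub_le_norm_sub_add_norm_sub x x' (y j), dist_eq_norm x x']

theorem lipschitzWith_cTransform_weights (x : E) : LipschitzWith 1 fun w => cTransform y w x := by
  refine LipschitzWith.of_le_add fun w w' => ?_
  obtain ⟨j, hj⟩ := exists_cTransform_eq y w' x
  have := dist_le_pi_dist w w' j
  rw [Real.dist_eq] at this
  linarith [cTransform_le y w x j, neg_abs_le (w j - w' j)]

theorem cTransform_eq_of_mem_laguerreCell {x : E} {k : ι} (hx : x ∈ laguerreCell y w k) :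
    cTransform y w x = ‖x - y k‖ - w k := by
  refine le_antisymm (cTransform_le y w x k) (le_cTransform y w fun i => ?_)
  rcases eq_or_ne i k with rfl | hik
  exacts [le_rfl, (hx i hik).le]

theorem eq_of_mem_laguerreCell_of_cTransform_eq {x : E} {i k : ι} (hx : x ∈ laguerreCell y w k)
    (hi : cTransform y w x = ‖x - y i‖ - w i) : i = k := by
  by_contra hik
  linarith [hx i hik, cTransform_eq_of_mem_laguerreCell y w hx]

theorem exists_mem_laguerreCell_or_exists_tie (x : E) :
    (∃ k, x ∈ laguerreCell y w k) ∨ ∃ i k, i ≠ k ∧ ‖x - y i‖ - ‖x - y k‖ = w i - w k := by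
  obtain ⟨k, hk⟩ := exists_cTransform_eq y w x
  by_cases h : x ∈ laguerreCell y w k
  · exact .inl ⟨k, h⟩
  · simp only [laguerreCell, mem_ofPred_eq, not_forall, not_lt] at h
    obtain ⟨i, hik, hi⟩ := h
    exact .inr ⟨i, k, hik, by linarith [cTransform_le y w x i]⟩

theorem hasDerivAt_cTransform_add_smul_single [DecidableEq ι] {x : E} {k : ι}
    (hx : x ∈ laguerreCell y w k) (j : ι) :
    HasDerivAt (fun t : ℝ => cTransform y (w + t • Pi.single j 1) x)
      (-(laguerreCell y w j).indicator 1 x) 0 := by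
  set e : ι → ℝ := Pi.single j 1
  have hline : Tendsto (fun t : ℝ => w + t • e) (𝓝 0) (𝓝 w) :=
    (by fun_prop : Continuous fun t : ℝ => w + t • e).tendsto' 0 w (by simp)
  have hev : (fun t : ℝ => cTransform y (w + t • e) x) =ᶠ[𝓝 0]
      fun t => ‖x - y k‖ - w k - t * e k :=
    (hline.eventually (eventually_mem_laguerreCell y w hx)).mono fun t ht => by
      dsimp only
      rw [cTransform_eq_of_mem_laguerreCell y _ ht]
      simp only [Pi.add_apply, Pi.smul_apply, smul_eq_mul]
      ring
  have hk : e k = (laguerreCell y w j).indicator 1 x := by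
    rcases eq_or_ne k j with rfl | hkj
    · simp [e, indicator_of_mem hx]
    · rw [show e k = 0 from Pi.single_eq_of_ne hkj 1, indicator_of_notMem fun hj =>
        hkj ((pairwise_disjoint_laguerreCell y w).eq (not_disjoint_iff.2 ⟨x, hx, hj⟩))]
  rw [← hk]
  simpa using (((hasDerivAt_id (0 : ℝ)).mul_const (e k)).const_sub
    (‖x - y k‖ - w k)).congr_of_eventuallyEq hev

end LaguerreCells

section Integration

variable {E ι : Type*} [NormedAddCommGroup E] [MeasurableSpace E] [Fintype ι] {μ : Measure E}
  (y : ι → E) (w : ι → ℝ)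

theorem measurable_laguerreMap [BorelSpace E] [SecondCountableTopology E] :
    Measurable (laguerreMap y w) :=
  Finset.measurable_sum _ fun k _ =>
    measurable_const.indicator (isOpen_laguerreCell y w k).measurableSet

theorem map_laguerreMap [BorelSpace E] [SecondCountableTopology E]
    (hcover : ∀ᵐ x ∂μ, ∃ k, x ∈ laguerreCell y w k) :
    μ.map (laguerreMap y w) = ∑ k, μ (laguerreCell y w k) • Measure.dirac (y k) := by
  have hmeas k := (isOpen_laguerreCell y w k).measurableSet
  have hcells : μ = Measure.sum fun k => μ.restrict (laguerreCell y w k) := by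
    rw [← Measure.restrict_iUnion (pairwise_disjoint_laguerreCell y w) hmeas,
      Measure.restrict_eq_self_of_ae_mem (by simpa only [mem_iUnion] using hcover)]
  conv_lhs => rw [hcells]
  rw [Measure.map_sum (measurable_laguerreMap y w).aemeasurable, Measure.sum_fintype]
  refine Finset.sum_congr rfl fun k _ => ?_
  rw [Measure.map_congr (ae_restrict_of_forall_mem (hmeas k) fun x hx =>
    laguerreMap_eq_of_mem y w hx), Measure.map_const, Measure.restrict_apply_univ]

variable [OpensMeasurableSpace E] [Nonempty ι]

theorem integrable_cTransform [IsFiniteMeasure μ] (hμ : Integrable (fun x => ‖x‖) μ) :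
    Integrable (cTransform y w) μ := by
  refine Integrable.mono' (hμ.add (integrable_const |cTransform y w 0|))
    (lipschitzWith_cTransform y w).continuous.aestronglyMeasurable (ae_of_all _ fun x => ?_)
  have := (lipschitzWith_cTransform y w).dist_le_mul x 0
  simp only [NNReal.coe_one, one_mul, dist_zero_right, Real.dist_eq] at this
  simp only [Pi.add_apply, Real.norm_eq_abs]
  linarith [abs_sub_abs_le_abs_sub (cTransform y w x) (cTransform y w 0)]

theorem lipschitzWith_integral_cTransform [IsProbabilityMeasure μ]
    (hμ : Integrable (fun x => ‖x‖) μ) : LipschitzWith 1 fun w => ∫ x, cTransform y w x ∂μ := by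
  refine LipschitzWith.of_dist_le_mul fun w w' => ?_
  rw [Real.dist_eq, ← integral_sub (integrable_cTransform y w hμ) (integrable_cTransform y w' hμ)]
  have hle x : ‖cTransform y w x - cTransform y w' x‖ ≤ dist w w' := by
    simpa [Real.dist_eq] using (lipschitzWith_cTransform_weights y x).dist_le_mul w w'
  simpa using norm_integral_le_of_norm_le_const (μ := μ) (ae_of_all _ hle)

end Integration

section KantorovichDual

variable {E ι : Type*} [NormedAddCommGroup E] [MeasurableSpace E] [OpensMeasurableSpace E]
  [Fintype ι] [Nonempty ι] (μ : Measure E) [IsProbabilityMeasure μ] (y : ι → E) (a : ι → ℝ)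

def kantorovichDual (w : ι → ℝ) : ℝ :=
  ∑ j, a j * w j + ∫ x, cTransform y w x ∂μ

variable {μ}

theorem continuous_kantorovichDual (hμ : Integrable (fun x => ‖x‖) μ) :
    Continuous (kantorovichDual μ y a) :=
  (continuous_finsetSum _ fun j _ => continuous_const.mul (continuous_apply j)).add
    (lipschitzWith_integral_cTransform y hμ).continuous

theorem kantorovichDual_add_const (hμ : Integrable (fun x => ‖x‖) μ) (hsum : ∑ j, a j = 1)
    (w : ι → ℝ) (c : ℝ) : kantorovichDual μ y a (w + fun _ => c) = kantorovichDual μ y a w := by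
  simp only [kantorovichDual, cTransform_add_const, Pi.add_apply, mul_add, Finset.sum_add_distrib,
    ← Finset.sum_mul, hsum, one_mul]
  rw [integral_sub (integrable_cTransform y w hμ) (integrable_const c)]
  simp

theorem kantorovichDual_le_of_nonpos (hμ : Integrable (fun x => ‖x‖) μ) (ha : ∀ j, 0 ≤ a j)
    {w : ι → ℝ} (hw : w ≤ 0) {i : ι} (hi : w i = 0) (k : ι) :
    kantorovichDual μ y a w ≤ ∫ x, ‖x - y i‖ ∂μ + a k * w k := by
  have hint : Integrable (fun x => ‖x - y i‖) μ :=
    (hμ.add (integrable_const ‖y i‖)).mono'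
      (continuous_id.sub continuous_const).norm.aestronglyMeasurable
      (ae_of_all _ fun x => by simpa using norm_sub_le x (y i))
  have hφ : ∫ x, cTransform y w x ∂μ ≤ ∫ x, ‖x - y i‖ ∂μ :=
    integral_mono (integrable_cTransform y w hμ) hint fun x => by
      simpa [hi] using cTransform_le y w x i
  have hlin : ∑ j, a j * w j ≤ a k * w k := by
    classical
    rw [← Finset.add_sum_erase _ _ (Finset.mem_univ k)]
    linarith [Finset.sum_nonpos fun j (_ : j ∈ Finset.univ.erase k) =>
      mul_nonpos_of_nonneg_of_nonpos (ha j) (hw j)]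
  rw [kantorovichDual]
  linarith

theorem exists_forall_kantorovichDual_le (hμ : Integrable (fun x => ‖x‖) μ) (ha : ∀ j, 0 < a j)
    (hsum : ∑ j, a j = 1) :
    ∃ w, ∀ w', kantorovichDual μ y a w' ≤ kantorovichDual μ y a w := by
  set F := kantorovichDual μ y a
  set C := Finset.univ.sup' Finset.univ_nonempty fun i => ∫ x, ‖x - y i‖ ∂μ
  have hF : ∀ w, w ≤ 0 → ∀ i, w i = 0 → ∀ k, F w ≤ C + a k * w k := fun w hw i hi k =>
    (kantorovichDual_le_of_nonpos y a hμ (fun j => (ha j).le) hw hi k).trans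
      (by gcongr; exact Finset.le_sup' (fun i => ∫ x, ‖x - y i‖ ∂μ) (Finset.mem_univ i))
  have hF0 : F 0 ≤ C := by
    simpa using hF 0 le_rfl (Classical.arbitrary ι) rfl (Classical.arbitrary ι)
  -- outside the box `[-R, 0]`, weights normalized by `max w = 0` do worse than `0`
  set R : ι → ℝ := fun k => (C - F 0) / a k
  have h0 : (0 : ι → ℝ) ∈ Icc (-R) 0 :=
    ⟨fun k => neg_nonpos.2 (div_nonneg (sub_nonneg.2 hF0) (ha k).le), le_rfl⟩
  obtain ⟨w₀, -, hw₀⟩ :=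
    isCompact_Icc.exists_isMaxOn ⟨0, h0⟩ (continuous_kantorovichDual y a hμ).continuousOn
  refine ⟨w₀, fun w => ?_⟩
  obtain ⟨i, -, hi⟩ := Finset.exists_mem_eq_sup' Finset.univ_nonempty w
  set w' := w + fun _ => -Finset.univ.sup' Finset.univ_nonempty w
  have hw' : w' ≤ 0 := fun j => by
    simp only [w', Pi.add_apply, Pi.zero_apply]
    linarith [Finset.le_sup' w (Finset.mem_univ j)]
  have hw'i : w' i = 0 := by simp [w', hi]
  rw [show F w = F w' from (kantorovichDual_add_const y a hμ hsum w _).symm]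
  by_cases hK : w' ∈ Icc (-R) 0
  · exact hw₀ hK
  obtain ⟨k, hk⟩ : ∃ k, w' k < -R k := by
    simpa [Pi.le_def, hw'] using hK
  have : a k * R k = C - F 0 := mul_div_cancel₀ _ (ha k).ne'
  calc F w' ≤ C + a k * w' k := hF w' hw' i hw'i k
    _ ≤ F 0 := by nlinarith [ha k]
    _ ≤ F w₀ := hw₀ h0

theorem hasDerivAt_kantorovichDual [DecidableEq ι] {w : ι → ℝ} (hμ : Integrable (fun x => ‖x‖) μ)
    (hcover : ∀ᵐ x ∂μ, ∃ k, x ∈ laguerreCell y w k) (j : ι) :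
    HasDerivAt (fun t : ℝ => kantorovichDual μ y a (w + t • Pi.single j 1))
      (a j - μ.real (laguerreCell y w j)) 0 := by
  have hmeas := (isOpen_laguerreCell y w j).measurableSet
  set e : ι → ℝ := Pi.single j 1
  have hlin : HasDerivAt (fun t : ℝ => ∑ i, a i * (w + t • e) i) (a j) 0 := by
    simpa [e, mul_add, Finset.sum_add_distrib, Pi.single_apply] using
      (hasDerivAt_id (0 : ℝ)).const_mul (a j) |>.const_add (∑ i, a i * w i)
  have hlip x : LipschitzWith 1 fun t : ℝ => cTransform y (w + t • e) x := by
    refine LipschitzWith.of_dist_le_mul fun t s => ?_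
    calc _ ≤ _ * dist (w + t • e) (w + s • e) :=
          (lipschitzWith_cTransform_weights y x).dist_le_mul _ _
      _ = _ := by simp [e, dist_eq_norm, ← sub_smul, norm_smul, Pi.norm_single]
  obtain ⟨-, hint⟩ := hasDerivAt_integral_of_dominated_loc_of_lip (bound := fun _ => 1)
    (F' := fun x => -(laguerreCell y w j).indicator 1 x) univ_mem
    (Eventually.of_forall fun t => (lipschitzWith_cTransform y _).continuous.aestronglyMeasurable)
    (by simpa using integrable_cTransform y w hμ)
    (measurable_const.indicator hmeas).neg.aestronglyMeasurable
    (ae_of_all _ fun x => by simpa using hlip x) (integrable_const 1)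
    (hcover.mono fun x ⟨k, hk⟩ => hasDerivAt_cTransform_add_smul_single y w hk j)
  rw [integral_neg, integral_indicator_one hmeas] at hint
  exact hlin.add hint

theorem measure_laguerreCell_eq_of_forall_le (hμ : Integrable (fun x => ‖x‖) μ) {w : ι → ℝ}
    (hmax : ∀ w', kantorovichDual μ y a w' ≤ kantorovichDual μ y a w)
    (hcover : ∀ᵐ x ∂μ, ∃ k, x ∈ laguerreCell y w k) (j : ι) :
    μ (laguerreCell y w j) = ENNReal.ofReal (a j) := by
  classical
  have hlocal : IsLocalMax (fun t : ℝ => kantorovichDual μ y a (w + t • Pi.single j 1)) 0 :=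
    Eventually.of_forall fun t => by simpa using hmax _
  have := hlocal.hasDerivAt_eq_zero (hasDerivAt_kantorovichDual y a hμ hcover j)
  rw [← ofReal_measureReal, sub_eq_zero.1 this]

end KantorovichDual

theorem addHaar_eq_zero_of_finite_lineSlices {E : Type*} [NormedAddCommGroup E] [NormedSpace ℝ E]
    [FiniteDimensional ℝ E] [MeasurableSpace E] [BorelSpace E] (μ : Measure E)
    [μ.IsAddHaarMeasure] {S : Set E} (hS : MeasurableSet S) (u : E)
    (h : ∀ x, {t : ℝ | x + t • u ∈ S}.Finite) : μ S = 0 :=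
  measure_eq_zero_iff_ae_notMem.2 <| ae_mem_of_ae_add_linearMap_mem
    (LinearMap.toSpanSingleton ℝ E u) volume μ hS.compl fun x =>
      measure_eq_zero_iff_ae_notMem.1 ((h x).measure_zero volume)

section InnerProductSpace

variable {E : Type*} [NormedAddCommGroup E] [InnerProductSpace ℝ E]

theorem finite_setOf_norm_add_smul_eq (z : E) {u : E} (hu : u ≠ 0) (r : ℝ) :
    {t : ℝ | ‖z + t • u‖ = r}.Finite := by
  open Polynomial in
  let P : ℝ[X] := C (‖u‖ ^ 2) * X ^ 2 + C (2 * inner ℝ z u) * X + C (‖z‖ ^ 2 - r ^ 2)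
  have hP : P ≠ 0 := fun h => by
    have := congrArg (coeff · 2) h
    simp only [P, coeff_add, coeff_C_mul, coeff_X_pow, coeff_X, coeff_C] at this
    simp at this
    exact hu this
  refine (Polynomial.finite_setOfPred_isRoot hP).subset fun t (ht : ‖z + t • u‖ = r) => ?_
  have : ‖z + t • u‖ ^ 2 = r ^ 2 := by rw [ht]
  rw [norm_add_sq_real, inner_smul_right, norm_smul, mul_pow, Real.norm_eq_abs, sq_abs] at this
  simp only [Polynomial.IsRoot, P, mem_ofPred_eq, Polynomial.eval_add, Polynomial.eval_mul,
    Polynomial.eval_C, Polynomial.eval_pow, Polynomial.eval_X]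
  linarith

variable [FiniteDimensional ℝ E]

theorem exists_ne_zero_inner_eq_zero (hE : 2 ≤ finrank ℝ E) (v : E) :
    ∃ u ≠ 0, inner ℝ u v = 0 := by
  have hv : finrank ℝ (ℝ ∙ v) ≤ 1 := by simpa using finrank_span_le_card (R := ℝ) ({v} : Set E)
  obtain ⟨u, hu, hu0⟩ := Submodule.exists_mem_ne_zero_of_ne_bot (p := (ℝ ∙ v)ᗮ) fun h => by
    have := Submodule.finrank_add_finrank_orthogonal (ℝ ∙ v)
    rw [h, finrank_bot] at this
    omega
  exact ⟨u, hu0, Submodule.mem_orthogonal_singleton_iff_inner_left.1 hu⟩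

variable [MeasurableSpace E] [BorelSpace E]

theorem addHaar_setOf_norm_sub_sub_norm_sub_eq (μ : Measure E) [μ.IsAddHaarMeasure]
    (hE : 2 ≤ finrank ℝ E) {p q : E} (hpq : p ≠ q) (c : ℝ) :
    μ {x | ‖x - p‖ - ‖x - q‖ = c} = 0 := by
  rcases eq_or_ne c 0 with rfl | hc
  · refine measure_mono_null (fun x (hx : _ = _) => ?_)
      (Measure.addHaar_affineSubspace μ _ (mt AffineSubspace.perpBisector_eq_top.1 hpq))
    simpa [AffineSubspace.mem_perpBisector_iff_dist_eq, dist_eq_norm, sub_eq_zero] using hx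
  obtain ⟨u, hu0, hu⟩ := exists_ne_zero_inner_eq_zero hE (q - p)
  refine addHaar_eq_zero_of_finite_lineSlices μ
    (measurableSet_eq_fun (by fun_prop) measurable_const) u fun x => ?_
  -- along `u ⊥ q - p`, `‖· - p‖² - ‖· - q‖²` is a constant `K`, so on the level set `‖· - q‖` is
  -- the constant `(K / c - c) / 2`
  set K := ‖x - q + (q - p)‖ ^ 2 - ‖x - q‖ ^ 2
  refine (finite_setOf_norm_add_smul_eq (x - q) hu0 ((K / c - c) / 2)).subset
    fun t (ht : ‖x + t • u - p‖ - ‖x + t • u - q‖ = c) => ?_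
  have hK : ‖x + t • u - p‖ ^ 2 - ‖x + t • u - q‖ ^ 2 = K := by
    rw [show x + t • u - p = x - q + t • u + (q - p) by abel,
      show x + t • u - q = x - q + t • u by abel]
    simp only [K, norm_add_sq_real, inner_add_left, real_inner_smul_left, hu]
    ring
  have : ‖x + t • u - p‖ + ‖x + t • u - q‖ = K / c := by
    rw [eq_div_iff hc, ← ht, ← hK]
    ring
  show ‖x - q + t • u‖ = (K / c - c) / 2
  rw [sub_add_eq_add_sub]
  linarith

theorem ae_exists_mem_laguerreCell {ι : Type*} [Fintype ι] [Nonempty ι] {μ ν : Measure E}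
    [μ.IsAddHaarMeasure] (hν : ν ≪ μ) (hE : 2 ≤ finrank ℝ E) {y : ι → E} (hy : Injective y)
    (w : ι → ℝ) : ∀ᵐ x ∂ν, ∃ k, x ∈ laguerreCell y w k := by
  have hties : ∀ᵐ x ∂ν, ∀ i k, i ≠ k → ‖x - y i‖ - ‖x - y k‖ ≠ w i - w k := by
    simp only [ae_all_iff, eventually_imp_distrib_left]
    exact fun i k hik => hν.ae_le <| measure_eq_zero_iff_ae_notMem.1 <|
      addHaar_setOf_norm_sub_sub_norm_sub_eq μ hE (hy.ne hik) (w i - w k)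
  filter_upwards [hties] with x hx
  exact (exists_mem_laguerreCell_or_exists_tie y w x).resolve_right fun ⟨i, k, hik, h⟩ =>
    hx i k hik h

end InnerProductSpace

section Coupling

variable {α β : Type*} [MeasurableSpace α] [MeasurableSpace β] {μ : Measure α} {ν : Measure β}
  {π : Measure (α × β)} {φ : α → ℝ} {ψ : β → ℝ} {c : α × β → ℝ}

theorem ofReal_integral_le_lintegral_ofReal {f : α → ℝ} (hf : Integrable f μ) :
    ENNReal.ofReal (∫ x, f x ∂μ) ≤ ∫⁻ x, ENNReal.ofReal (f x) ∂μ :=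
  calc ENNReal.ofReal (∫ x, f x ∂μ) ≤ ENNReal.ofReal (∫ x, max (f x) 0 ∂μ) :=
        ENNReal.ofReal_le_ofReal (integral_mono hf hf.pos_part fun x => le_max_left _ _)
    _ = ∫⁻ x, ENNReal.ofReal (f x) ∂μ := by
        rw [ofReal_integral_eq_lintegral_ofReal hf.pos_part
          (ae_of_all _ fun x => le_max_right _ _)]
        simp [ENNReal.ofReal_max]

theorem integrable_add_comp_fst_snd (h1 : π.map Prod.fst = μ) (h2 : π.map Prod.snd = ν)
    (hφ : Integrable φ μ) (hψ : Integrable ψ ν) : Integrable (fun z => φ z.1 + ψ z.2) π := by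
  subst h1 h2
  exact (hφ.comp_measurable measurable_fst).add (hψ.comp_measurable measurable_snd)

theorem integral_add_comp_fst_snd (h1 : π.map Prod.fst = μ) (h2 : π.map Prod.snd = ν)
    (hφ : Integrable φ μ) (hψ : Integrable ψ ν) :
    ∫ z, φ z.1 + ψ z.2 ∂π = ∫ x, φ x ∂μ + ∫ y, ψ y ∂ν := by
  subst h1 h2
  rw [integral_map measurable_fst.aemeasurable hφ.1, integral_map measurable_snd.aemeasurable hψ.1]
  exact integral_add (hφ.comp_measurable measurable_fst) (hψ.comp_measurable measurable_snd)

theorem ofReal_integral_add_integral_le_lintegral (h1 : π.map Prod.fst = μ)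
    (h2 : π.map Prod.snd = ν) (hφ : Integrable φ μ) (hψ : Integrable ψ ν)
    (hle : ∀ᵐ z ∂π, φ z.1 + ψ z.2 ≤ c z) :
    ENNReal.ofReal (∫ x, φ x ∂μ + ∫ y, ψ y ∂ν) ≤ ∫⁻ z, ENNReal.ofReal (c z) ∂π := by
  rw [← integral_add_comp_fst_snd h1 h2 hφ hψ]
  exact (ofReal_integral_le_lintegral_ofReal (integrable_add_comp_fst_snd h1 h2 hφ hψ)).trans
    (lintegral_mono_ae (hle.mono fun z hz => ENNReal.ofReal_le_ofReal hz))

theorem ae_add_eq_of_lintegral_le (h1 : π.map Prod.fst = μ) (h2 : π.map Prod.snd = ν)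
    (hφ : Integrable φ μ) (hψ : Integrable ψ ν) (hc : Measurable c) (hc0 : ∀ z, 0 ≤ c z)
    (hle : ∀ᵐ z ∂π, φ z.1 + ψ z.2 ≤ c z) (hS : 0 ≤ ∫ x, φ x ∂μ + ∫ y, ψ y ∂ν)
    (hcost : ∫⁻ z, ENNReal.ofReal (c z) ∂π ≤ ENNReal.ofReal (∫ x, φ x ∂μ + ∫ y, ψ y ∂ν)) :
    ∀ᵐ z ∂π, φ z.1 + ψ z.2 = c z := by
  have hint := integrable_add_comp_fst_snd h1 h2 hφ hψ
  have hcint : Integrable c π := ⟨hc.aestronglyMeasurable,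
    (hasFiniteIntegral_iff_ofReal (ae_of_all _ hc0)).2 (hcost.trans_lt ofReal_lt_top)⟩
  have hgap : 0 ≤ᵐ[π] fun z => c z - (φ z.1 + ψ z.2) := hle.mono fun z hz => sub_nonneg.2 hz
  have hcS : ∫ z, c z ∂π ≤ ∫ x, φ x ∂μ + ∫ y, ψ y ∂ν := by
    rw [integral_eq_lintegral_of_nonneg_ae (ae_of_all _ hc0) hc.aestronglyMeasurable]
    exact ENNReal.toReal_le_of_le_ofReal hS hcost
  have hzero : ∫ z, c z - (φ z.1 + ψ z.2) ∂π = 0 := by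
    refine le_antisymm ?_ (integral_nonneg_of_ae hgap)
    rw [integral_sub hcint hint, integral_add_comp_fst_snd h1 h2 hφ hψ]
    linarith
  filter_upwards [(integral_eq_zero_iff_of_nonneg_ae hgap (hcint.sub hint)).1 hzero] with z hz
  exact (sub_eq_zero.1 hz).symm

theorem eq_map_prodMk_of_ae_snd_eq {T : α → β} (hT : Measurable T) (h1 : π.map Prod.fst = μ)
    (hgraph : ∀ᵐ z ∂π, z.2 = T z.1) : π = μ.map fun x => (x, T x) := by
  calc π = π.map fun z => (z.1, T z.1) := by
        rw [← Measure.map_congr (f := id) (g := fun z => (z.1, T z.1))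
          (hgraph.mono fun z hz => Prod.ext rfl hz), Measure.map_id]
    _ = μ.map fun x => (x, T x) := by
        rw [← h1, Measure.map_map (g := fun x => (x, T x)) (measurable_id.prodMk hT) measurable_fst]
        rfl

def IsUniqueOptimalCoupling (c : α × β → ℝ) (μ : Measure α) (ν : Measure β)
    (π₀ : Measure (α × β)) : Prop :=
  π₀.map Prod.fst = μ ∧ π₀.map Prod.snd = ν ∧
    ∀ π : Measure (α × β), π.map Prod.fst = μ → π.map Prod.snd = ν →
      (∫⁻ z, ENNReal.ofReal (c z) ∂π₀ ≤ ∫⁻ z, ENNReal.ofReal (c z) ∂π) ∧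
      (∫⁻ z, ENNReal.ofReal (c z) ∂π ≤ ∫⁻ z, ENNReal.ofReal (c z) ∂π₀ → π = π₀)

theorem IsUniqueOptimalCoupling.iInf_lintegral_eq {π₀ : Measure (α × β)}
    (h : IsUniqueOptimalCoupling c μ ν π₀) :
    ⨅ (π : Measure (α × β)) (_ : π.map Prod.fst = μ) (_ : π.map Prod.snd = ν),
      ∫⁻ z, ENNReal.ofReal (c z) ∂π = ∫⁻ z, ENNReal.ofReal (c z) ∂π₀ :=
  le_antisymm (iInf_le_of_le π₀ (iInf_le_of_le h.1 (iInf_le_of_le h.2.1 le_rfl)))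
    (le_iInf fun π => le_iInf fun h1 => le_iInf fun h2 => (h.2.2 π h1 h2).1)

theorem isUniqueOptimalCoupling_map_prodMk {T : α → β} (hT : Measurable T) (hTν : μ.map T = ν)
    (hφ : Integrable φ μ) (hψ : Integrable ψ ν) (hc : Measurable c) (hc0 : ∀ z, 0 ≤ c z)
    {Y : Set β} (hY : ∀ᵐ y ∂ν, y ∈ Y) (hle : ∀ x, ∀ y ∈ Y, φ x + ψ y ≤ c (x, y))
    (hcontact : ∀ᵐ x ∂μ, ∀ y ∈ Y, φ x + ψ y = c (x, y) ↔ y = T x) :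
    IsUniqueOptimalCoupling c μ ν (μ.map fun x => (x, T x)) ∧
      ∫⁻ z, ENNReal.ofReal (c z) ∂(μ.map fun x => (x, T x)) =
        ENNReal.ofReal (∫ x, c (x, T x) ∂μ) := by
  subst hTν
  have hgraph : Measurable fun x => (x, T x) := measurable_id.prodMk hT
  have hψT : Integrable (fun x => ψ (T x)) μ := hψ.comp_measurable hT
  have heq : (fun x => φ x + ψ (T x)) =ᵐ[μ] fun x => c (x, T x) := by
    filter_upwards [hcontact, ae_of_ae_map hT.aemeasurable hY] with x hx hxY using
      (hx _ hxY).2 rfl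
  have hS : ∫ x, c (x, T x) ∂μ = ∫ x, φ x ∂μ + ∫ y, ψ y ∂(μ.map T) := by
    rw [← integral_congr_ae heq, integral_add hφ hψT, integral_map hT.aemeasurable hψ.1]
  have hcostT : ∫⁻ z, ENNReal.ofReal (c z) ∂(μ.map fun x => (x, T x)) =
      ENNReal.ofReal (∫ x, c (x, T x) ∂μ) := by
    rw [lintegral_map hc.ennreal_ofReal hgraph,
      ofReal_integral_eq_lintegral_ofReal ((hφ.add hψT).congr heq) (ae_of_all _ fun x => hc0 _)]
  have hleπ (π : Measure (α × β)) (h2 : π.map Prod.snd = μ.map T) :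
      ∀ᵐ z ∂π, z.2 ∈ Y ∧ φ z.1 + ψ z.2 ≤ c z :=
    (ae_of_ae_map measurable_snd.aemeasurable (h2 ▸ hY)).mono fun z hz => ⟨hz, hle z.1 z.2 hz⟩
  refine ⟨⟨?_, ?_, fun π h1 h2 => ⟨?_, fun hcost => ?_⟩⟩, hcostT⟩
  · rw [Measure.map_map measurable_fst hgraph]
    exact Measure.map_id
  · rw [Measure.map_map measurable_snd hgraph]
    rfl
  · rw [hcostT, hS]
    exact ofReal_integral_add_integral_le_lintegral h1 h2 hφ hψ
      ((hleπ π h2).mono fun _ => And.right)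
  · rw [hcostT, hS] at hcost
    have hS0 : 0 ≤ ∫ x, φ x ∂μ + ∫ y, ψ y ∂(μ.map T) := hS ▸ integral_nonneg fun x => hc0 _
    refine eq_map_prodMk_of_ae_snd_eq hT h1 ?_
    filter_upwards [ae_add_eq_of_lintegral_le h1 h2 hφ hψ hc hc0
      ((hleπ π h2).mono fun _ => And.right) hS0 hcost, hleπ π h2,
      ae_of_ae_map measurable_fst.aemeasurable (h1 ▸ hcontact)] with z hz hzY hzT
    exact (hzT z.2 hzY.1).1 hz

end Coupling

theorem isUniqueOptimalCoupling_laguerreMap {E ι : Type*} [NormedAddCommGroup E]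
    [MeasurableSpace E] [BorelSpace E] [SecondCountableTopology E] [Fintype ι] [Nonempty ι]
    {μ ν : Measure E} [IsFiniteMeasure μ] (hμ : Integrable (fun x => ‖x‖) μ) {y : ι → E}
    (hy : Injective y) {w : ι → ℝ} (hcover : ∀ᵐ x ∂μ, ∃ k, x ∈ laguerreCell y w k)
    (hν : μ.map (laguerreMap y w) = ν) :
    IsUniqueOptimalCoupling (fun z : E × E => ‖z.1 - z.2‖) μ ν
        (μ.map fun x => (x, laguerreMap y w x)) ∧
      ∫⁻ z, ENNReal.ofReal ‖z.1 - z.2‖ ∂(μ.map fun x => (x, laguerreMap y w x)) =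
        ENNReal.ofReal (∫ x, ‖x - laguerreMap y w x‖ ∂μ) := by
  set ψ : E → ℝ := fun z => ∑ k, ({y k} : Set E).indicator (fun _ => w k) z
  have hψ k : ψ (y k) = w k := by
    show ∑ i, ({y i} : Set E).indicator (fun _ => w i) (y k) = w k
    rw [Finset.sum_eq_single_of_mem k (Finset.mem_univ k) fun i _ hik =>
      indicator_of_notMem (s := {y i}) (a := y k) (fun h => hik (hy h).symm) _]
    exact indicator_of_mem (mem_singleton (y k)) _
  have hψint : Integrable ψ ν := by
    subst hν
    exact integrable_finsetSum _ fun k _ =>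
      (integrable_const (w k)).indicator (measurableSet_singleton _)
  have hνY : ∀ᵐ z ∂ν, z ∈ range y := by
    subst hν
    exact (ae_map_iff (measurable_laguerreMap y w).aemeasurable (finite_range y).measurableSet).2
      (hcover.mono fun x ⟨k, hk⟩ => ⟨k, (laguerreMap_eq_of_mem y w hk).symm⟩)
  refine isUniqueOptimalCoupling_map_prodMk (measurable_laguerreMap y w) hν
    (integrable_cTransform y w hμ) hψint (continuous_fst.sub continuous_snd).norm.measurable
    (fun _ => norm_nonneg _) hνY ?_ ?_
  · rintro x _ ⟨i, rfl⟩
    linarith [cTransform_le y w x i, hψ i]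
  · filter_upwards [hcover] with x ⟨k, hk⟩
    rintro _ ⟨i, rfl⟩
    rw [hψ i, laguerreMap_eq_of_mem y w hk, hy.eq_iff]
    constructor
    · exact fun h => eq_of_mem_laguerreCell_of_cTransform_eq y w hk (by linarith)
    · rintro rfl
      rw [cTransform_eq_of_mem_laguerreCell y w hk]
      ring

/-- In the semi-discrete setting with Euclidean cost, the
Monge–Kantorovich problem has a unique optimal transport plan, and this plan is
deterministic: it is induced by a transport map `T`, i.e. equals the push-forward
of `μ` under `x ↦ (x, T x)`, and `W₁(μ,ν) = ∫ ‖x - T x‖ dμ`. -/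
theorem semidiscrete_kantorovich_unique_deterministic
    {d n : ℕ} (hd : 2 ≤ d)
    (μ : Measure (EuclideanSpace ℝ (Fin d))) [IsProbabilityMeasure μ]
    (hac : μ ≪ volume)
    (hμint : Integrable (fun x => ‖x‖) μ)
    (y : Fin n → EuclideanSpace ℝ (Fin d)) (hy : Function.Injective y)
    (a : Fin n → ℝ) (ha : ∀ j, a j ∈ Set.Ioc (0 : ℝ) 1) (hsum : ∑ j, a j = 1)
    (ν : Measure (EuclideanSpace ℝ (Fin d)))
    (hν : ν = ∑ j, ENNReal.ofReal (a j) • Measure.dirac (y j)) :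
    ∃ T : EuclideanSpace ℝ (Fin d) → EuclideanSpace ℝ (Fin d),
      Measurable T ∧ μ.map T = ν ∧
      -- the coupling induced by `T` minimizes the transport cost over all couplings
      (∀ π : Measure (EuclideanSpace ℝ (Fin d) × EuclideanSpace ℝ (Fin d)),
        π.map Prod.fst = μ → π.map Prod.snd = ν →
        ∫⁻ z, ENNReal.ofReal ‖z.1 - z.2‖ ∂(μ.map (fun x => (x, T x))) ≤
          ∫⁻ z, ENNReal.ofReal ‖z.1 - z.2‖ ∂π) ∧
      -- it is the unique minimizer
      (∀ π : Measure (EuclideanSpace ℝ (Fin d) × EuclideanSpace ℝ (Fin d)),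
        π.map Prod.fst = μ → π.map Prod.snd = ν →
        ∫⁻ z, ENNReal.ofReal ‖z.1 - z.2‖ ∂π ≤
          ∫⁻ z, ENNReal.ofReal ‖z.1 - z.2‖ ∂(μ.map (fun x => (x, T x))) →
        π = μ.map (fun x => (x, T x))) ∧
      -- and `W₁(μ,ν) = ∫ ‖x - T x‖ dμ`
      (⨅ (π : Measure (EuclideanSpace ℝ (Fin d) × EuclideanSpace ℝ (Fin d)))
          (_ : π.map Prod.fst = μ) (_ : π.map Prod.snd = ν),
          ∫⁻ z, ENNReal.ofReal ‖z.1 - z.2‖ ∂π)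
        = ENNReal.ofReal (∫ x, ‖x - T x‖ ∂μ) := by
  have : Nonempty (Fin n) := by
    rcases n with _ | n
    · simp at hsum
    · exact ⟨0⟩
  obtain ⟨w, hw⟩ := exists_forall_kantorovichDual_le y a hμint (fun j => (ha j).1) hsum
  have hcover := ae_exists_mem_laguerreCell hac (by rwa [finrank_euclideanSpace_fin]) hy w
  have hTν : μ.map (laguerreMap y w) = ν := by
    simp_rw [map_laguerreMap y w hcover, measure_laguerreCell_eq_of_forall_le y a hμint hw hcover,
      hν]
  obtain ⟨hopt, hcost⟩ := isUniqueOptimalCoupling_laguerreMap hμint hy hcover hTν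
  exact ⟨laguerreMap y w, measurable_laguerreMap y w, hTν,
    fun π h1 h2 => (hopt.2.2 π h1 h2).1, fun π h1 h2 => (hopt.2.2 π h1 h2).2,
    hopt.iInf_lintegral_eq.trans hcost⟩
end
end

section
/- For every j ∈ {1, …, n}, the map w ↦ μ(Vor_w(j)) from ℝ^n to ℝ is continuous. -/
/-!
On every line parallel to `b - a` other than the line through `a` and `b`, the function
`‖x - a‖ - ‖x - b‖` takes each value only finitely often. Disintegrating Lebesgue measure along
these lines, and using that a single line is null in dimension at least `2`, every level set of
this function is null. As `Vor_w(j)` is cut out by the inequalities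
`‖x - y j‖ - ‖x - y k‖ ≤ w j - w k`, for a fixed `w₀` almost every point (for Lebesgue measure,
hence for `μ`) lies on none of the corresponding level sets, so membership in `Vor_w(j)` is
eventually constant as `w → w₀`, and dominated convergence gives continuity.
-/

open MeasureTheory ENNReal

noncomputable section

/-- The additively weighted Voronoi cell of the site `y j` with weights `w`. -/
def Vor {d n : ℕ} (y : Fin n → EuclideanSpace ℝ (Fin d)) (w : Fin n → ℝ) (j : Fin n) :
    Set (EuclideanSpace ℝ (Fin d)) :=
  {x | ∀ k, k ≠ j → ‖x - y j‖ - w j ≤ ‖x - y k‖ - w k}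

open Filter Topology Submodule
open scoped InnerProductSpace

lemma finite_setOf_quadratic_eq_zero {a b c : ℝ} (h : a ≠ 0 ∨ b ≠ 0 ∨ c ≠ 0) :
    {t : ℝ | a * t ^ 2 + b * t + c = 0}.Finite := by
  open Polynomial in
  have hp : C a * X ^ 2 + C b * X + C c ≠ 0 := by
    intro hp
    have h2 : a = 0 := by simpa using congrArg (coeff · 2) hp
    have h1 : b = 0 := by simpa [coeff_X] using congrArg (coeff · 1) hp
    have h0 : c = 0 := by simpa [coeff_C] using congrArg (coeff · 0) hp
    tauto
  refine (Polynomial.finite_setOfPred_isRoot hp).subset fun t ht => ?_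
  simpa [Polynomial.IsRoot] using ht

section InnerProductSpace

variable {E : Type*} [NormedAddCommGroup E] [InnerProductSpace ℝ E]

lemma real_inner_sq_lt_of_notMem_span_singleton {u v : E} (hv : v ≠ 0) (hu : u ∉ ℝ ∙ v) :
    ⟪u, v⟫_ℝ ^ 2 < ‖u‖ ^ 2 * ‖v‖ ^ 2 := by
  have hcs : ‖⟪v, u⟫_ℝ‖ = ‖v‖ * ‖u‖ ↔ v = 0 ∨ u ∈ ℝ ∙ v := (norm_inner_eq_norm_tfae ℝ v u).out 0 3
  have hne : |⟪v, u⟫_ℝ| ≠ ‖v‖ * ‖u‖ := fun h => (hcs.mp h).elim hv hu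
  have hlt := lt_of_le_of_ne (abs_real_inner_le_norm v u) hne
  rw [real_inner_comm, ← sq_abs, ← mul_pow, mul_comm ‖u‖]
  exact pow_lt_pow_left₀ hlt (abs_nonneg _) two_ne_zero

/-- Squaring twice turns the equation into a quadratic in `t`, which is nonzero by the strict
Cauchy–Schwarz inequality. -/
lemma finite_setOf_norm_add_smul_sub_norm_add_smul_eq {u v : E} (hv : v ≠ 0) (hu : u ∉ ℝ ∙ v)
    (c : ℝ) : {t : ℝ | ‖u + t • v‖ - ‖u + (t - 1) • v‖ = c}.Finite := by
  have hcs := real_inner_sq_lt_of_notMem_span_singleton hv hu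
  have hv2 : 0 < ‖v‖ ^ 2 := by positivity
  set p := ⟪u, v⟫_ℝ
  set r := ‖u‖ ^ 2
  set L := ‖v‖ ^ 2
  have hsq : ∀ s : ℝ, ‖u + s • v‖ ^ 2 = r + 2 * s * p + s ^ 2 * L := fun s => by
    rw [norm_add_sq_real, real_inner_smul_right, norm_smul, mul_pow, Real.norm_eq_abs, sq_abs]
    ring
  have hcoeff : 4 * L * (L - c ^ 2) ≠ 0 ∨
      4 * L * (2 * p - L - c ^ 2) - 4 * c ^ 2 * (2 * p - 2 * L) ≠ 0 ∨
      (2 * p - L - c ^ 2) ^ 2 - 4 * c ^ 2 * (r - 2 * p + L) ≠ 0 := by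
    by_contra! h
    obtain ⟨h2, -, h0⟩ := h
    have hc : c ^ 2 = L := by linarith [(mul_eq_zero.mp h2).resolve_left (by positivity)]
    rw [hc] at h0
    nlinarith
  refine (finite_setOf_quadratic_eq_zero hcoeff).subset fun t ht => ?_
  simp only [Set.mem_ofPred_eq] at ht ⊢
  set A := ‖u + t • v‖
  set B := ‖u + (t - 1) • v‖
  have hA := hsq t
  have hB := hsq (t - 1)
  have key : (A ^ 2 - B ^ 2 - c ^ 2) ^ 2 = 4 * c ^ 2 * B ^ 2 := by
    rw [← ht]; ring
  rw [hA, hB] at key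
  linear_combination key

lemma addHaar_setOf_norm_sub_sub_norm_sub_eq_s7 [FiniteDimensional ℝ E] [MeasurableSpace E]
    [BorelSpace E] (μ : Measure E) [μ.IsAddHaarMeasure] (hE : 2 ≤ Module.finrank ℝ E) {a b : E}
    (hab : a ≠ b) (c : ℝ) : μ {x | ‖x - a‖ - ‖x - b‖ = c} = 0 := by
  set v := b - a
  have hv : v ≠ 0 := sub_ne_zero.mpr hab.symm
  have hspan : (ℝ ∙ v) ≠ ⊤ := fun h => by
    have := finrank_span_singleton (K := ℝ) hv
    rw [h, finrank_top] at this
    omega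
  have hline : μ {y | y - a ∈ ℝ ∙ v} = 0 := by
    simp_rw [sub_eq_add_neg]
    exact (measure_preimage_add_right μ (-a) _).trans (Measure.addHaar_submodule μ _ hspan)
  suffices ∀ᵐ x ∂μ, ‖x - a‖ - ‖x - b‖ ≠ c by simpa [ae_iff] using this
  have hs : MeasurableSet {x | ‖x - a‖ - ‖x - b‖ ≠ c} :=
    (measurableSet_eq_fun (by fun_prop) measurable_const).compl
  refine (ae_ae_add_linearMap_mem_iff (LinearMap.toSpanSingleton ℝ E v) volume μ hs).mp ?_
  filter_upwards [measure_eq_zero_iff_ae_notMem.mp hline] with y hy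
  filter_upwards [measure_eq_zero_iff_ae_notMem.mp
    ((finite_setOf_norm_add_smul_sub_norm_add_smul_eq hv hy c).measure_zero volume)] with t ht
  have hya : y + t • v - a = y - a + t • v := by abel
  have hyb : y + t • v - b = y - a + (t - 1) • v := by simp only [v, sub_smul, one_smul]; abel
  simpa [hya, hyb] using ht

end InnerProductSpace

lemma eventually_le_iff_le_of_ne {r s₀ : ℝ} (h : r ≠ s₀) : ∀ᶠ s in 𝓝 s₀, (r ≤ s ↔ r ≤ s₀) := by
  rcases h.lt_or_gt with h | h
  · filter_upwards [eventually_gt_nhds h] with s hs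
    exact iff_of_true hs.le h.le
  · filter_upwards [eventually_lt_nhds h] with s hs
    exact iff_of_false hs.not_ge h.not_ge

/-- Off the null level sets, membership in `{x | ∀ k, g k x ≤ c k}` is locally constant in `c`. -/
lemma tendsto_measure_setOf_forall_le {X ι α : Type*} [MeasurableSpace X] [Finite ι]
    {μ : Measure X} [IsFiniteMeasure μ] {g : ι → X → ℝ} (hg : ∀ k, Measurable (g k))
    {l : Filter α} [l.IsCountablyGenerated] {c : α → ι → ℝ} {c₀ : ι → ℝ}
    (hc : Tendsto c l (𝓝 c₀)) (hnull : ∀ k, μ {x | g k x = c₀ k} = 0) :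
    Tendsto (fun i => μ {x | ∀ k, g k x ≤ c i k}) l (𝓝 (μ {x | ∀ k, g k x ≤ c₀ k})) := by
  have hmeas : ∀ c : ι → ℝ, MeasurableSet {x | ∀ k, g k x ≤ c k} := fun c => by
    simp only [Set.ofPred_forall]
    exact MeasurableSet.iInter fun k => measurableSet_le (hg k) measurable_const
  refine tendsto_measure_of_ae_tendsto_indicator_of_isFiniteMeasure l (hmeas c₀)
    (fun i => hmeas (c i)) ?_
  have hae : ∀ᵐ x ∂μ, ∀ k, g k x ≠ c₀ k := ae_all_iff.mpr fun k => by simpa [ae_iff] using hnull k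
  filter_upwards [hae] with x hx
  have hk : ∀ k, ∀ᶠ i in l, (g k x ≤ c i k ↔ g k x ≤ c₀ k) := fun k =>
    ((continuous_apply k).tendsto c₀).comp hc |>.eventually (eventually_le_iff_le_of_ne (hx k))
  filter_upwards [eventually_all.mpr hk] with i hi
  exact forall_congr' hi

/-- For every `j`, the map `w ↦ μ(Vor_w(j))` from `ℝⁿ` to `ℝ`
is continuous. -/
theorem measure_Vor_continuous
    {d n : ℕ} (hd : 2 ≤ d)
    (μ : Measure (EuclideanSpace ℝ (Fin d))) [IsProbabilityMeasure μ]
    (hac : μ ≪ volume)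
    (y : Fin n → EuclideanSpace ℝ (Fin d)) (hy : Function.Injective y) :
    ∀ j : Fin n, Continuous (fun w : Fin n → ℝ => (μ (Vor y w j)).toReal) := by
  intro j
  have hVor : ∀ w, Vor y w j = {x | ∀ k : {k // k ≠ j}, ‖x - y j‖ - ‖x - y k‖ ≤ w j - w k} :=
    fun w => Set.ext fun x => by
      simp only [Vor, Set.mem_ofPred_eq, Subtype.forall]
      exact forall₂_congr fun k _ => by constructor <;> intro h <;> linarith
  simp only [hVor]
  refine ENNReal.continuousOn_toReal.comp_continuous ?_ fun w => measure_ne_top μ _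
  have hc : Continuous fun (w : Fin n → ℝ) (k : {k // k ≠ j}) => w j - w k := by fun_prop
  refine continuous_iff_continuousAt.mpr fun w₀ =>
    tendsto_measure_setOf_forall_le (fun k => by fun_prop) hc.continuousAt fun k => hac ?_
  exact addHaar_setOf_norm_sub_sub_norm_sub_eq_s7 volume (by simpa using hd) (hy.ne k.2.symm) _
end
end
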